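/- arXiv:1505.01996 — 2 statements merged into one kernel-verified Lean document; each statement's English description precedes it below -/
import Mathlib

section
/- The poset Π_{n,s+1} of vector partitions of [n] into s+1 components (with least element 0̂ adjoined) is graded: it is bounded, with greatest element ([n],...,[n]), and every maximal chain has the same length n. -/
open Finset

/-- A vector partition of `[n]` into `s+1` components: a partition `P` of `[n]`
together with `s` labelings of its parts. -/
structure VPart (n s : ℕ) where
  P : Finpartition (Finset.univ : Finset (Fin n))
  w : Fin s → Finset (Fin n) → Finset (Fin n)
  card_w : ∀ i : Fin s, ∀ B ∈ P.parts, (w i B).card = B.card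
  part_w : ∀ i : Fin s, ∀ x : Fin n, ∃! B, B ∈ P.parts ∧ x ∈ w i B
  w_junk : ∀ i B, B ∉ P.parts → w i B = ∅

namespace VPart

variable {n s : ℕ}

@[ext] theorem ext' {x y : VPart n s} (hP : x.P = y.P) (hw : x.w = y.w) : x = y := by
  cases x; cases y; simp_all

/-- componentwise union-refinement order -/
instance : PartialOrder (VPart n s) where
  le x y := x.P ≤ y.P ∧
    ∀ i : Fin s, ∀ B ∈ x.P.parts, ∀ B' ∈ y.P.parts, B ⊆ B' → x.w i B ⊆ y.w i B'
  le_refl x := by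
    refine ⟨le_refl _, fun i B hB B' hB' hBB' => ?_⟩
    obtain rfl : B = B' := by
      obtain ⟨a, ha⟩ := x.P.nonempty_of_mem_parts hB
      exact x.P.eq_of_mem_parts hB hB' ha (hBB' ha)
    exact subset_rfl
  le_trans x y z hxy hyz := by
    refine ⟨le_trans hxy.1 hyz.1, fun i B hB B'' hB'' hBB'' => ?_⟩
    obtain ⟨B', hB', hBB'⟩ := hxy.1 hB
    obtain ⟨B''', hB''', hB'B'''⟩ := hyz.1 hB'
    obtain ⟨a, ha⟩ := x.P.nonempty_of_mem_parts hB
    obtain rfl : B''' = B'' :=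
      z.P.eq_of_mem_parts hB''' hB'' (hB'B''' (hBB' ha)) (hBB'' ha)
    exact subset_trans (hxy.2 i B hB B' hB' hBB') (hyz.2 i B' hB' B''' hB''' hB'B''')
  le_antisymm x y hxy hyx := by
    have hP : x.P = y.P := le_antisymm hxy.1 hyx.1
    refine ext' hP ?_
    funext i B
    by_cases hB : B ∈ x.P.parts
    · exact subset_antisymm (hxy.2 i B hB B (hP ▸ hB) subset_rfl)
        (hyx.2 i B (hP ▸ hB) B hB subset_rfl)
    · rw [x.w_junk i B hB, y.w_junk i B (hP ▸ hB)]

/-- the part of the underlying partition containing `k` -/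
def partOf (x : VPart n s) (k : Fin n) : Finset (Fin n) := x.P.part k

/-- the atom word of `x`: `atomWord x i k` is the element of the `i`-th label of the
part containing `k` whose rank in that label matches the rank of `k` in its part. -/
def atomWord (x : VPart n s) (i : Fin s) (k : Fin n) : Fin n :=
  (((x.w i (x.partOf k)).sort (· ≤ ·)).getD (((x.partOf k).filter (· < k)).card)) k

/-- `x` is an atom: all parts of the underlying partition are singletons. -/
def IsAtomic (x : VPart n s) : Prop := ∀ B ∈ x.P.parts, B.card = 1

/-- strict lexicographic order on atom words, with `i` as the major index
and `k` the minor index. -/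
def wordLt (A B : Fin s → Fin n → Fin n) : Prop :=
  ∃ i k, A i k < B i k ∧
    ∀ i' k', (i' < i ∨ (i' = i ∧ k' < k)) → A i' k' = B i' k'

def wordLe (A B : Fin s → Fin n → Fin n) : Prop := wordLt A B ∨ A = B

end VPart

/-!
Grade by `r(0̂) = 0` and `r(x) = n + 1 - #(parts of x)`, so that `r(⊤) = n`. A strict
refinement has strictly fewer parts, so `r` is strictly monotone. It also goes up by exactly one
along covers: if `x < y` differ by at least two parts, merging two blocks of `x` that lie in the
same block of `y`, each new block labelled by the union of the labels it absorbs, gives an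
element strictly between them; and below any `y` with fewer than `n` parts lies an atom, built
from permutations sending every block of `y` onto its labels. Consecutive elements of a maximal
chain are covers, so its ranks are exactly `0, 1, …, n`.
-/

section GradedChains

variable {α : Type*} [PartialOrder α]

theorem IsMaxChain.exists_covBy_mem [WellFoundedLT α] {s : Set α}
    (hs : IsMaxChain (· ≤ ·) s) {a b : α} (ha : a ∈ s) (hb : b ∈ s) (hab : a < b) :
    ∃ c ∈ s, a ⋖ c := by
  obtain ⟨c, ⟨hcs, hac⟩, hmin⟩ :=
    exists_minimal_of_wellFoundedLT (fun u => u ∈ s ∧ a < u) ⟨b, hb, hab⟩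
  have hc_le : ∀ u ∈ s, a < u → c ≤ u := fun u hu hau =>
    (hs.1.total hu hcs).elim (hmin ⟨hu, hau⟩) id
  refine ⟨c, hcs, hac, fun z haz hzc => ?_⟩
  have hchain : IsChain (· ≤ ·) (insert z s) := by
    refine hs.1.insert fun u hu _ => ?_
    by_cases hua : u ≤ a
    · exact Or.inr (hua.trans haz.le)
    · exact Or.inl (hzc.le.trans (hc_le u hu (hs.1.lt_of_not_ge hu ha hua)))
  have hzs : z ∈ s := (hs.2 hchain (Set.subset_insert z s)) ▸ Set.mem_insert z s
  exact hzc.not_ge (hc_le z hzs haz)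

theorem IsMaxChain.card_eq_grade_top_add_one [BoundedOrder α] [GradeMinOrder ℕ α]
    {s : Finset α} (hs : IsMaxChain (· ≤ ·) (s : Set α)) : #s = grade ℕ (⊤ : α) + 1 := by
  have hinj : Set.InjOn (grade ℕ) s := fun a ha b hb hab =>
    (hs.1.total ha hb).elim
      (fun h => h.eq_of_not_lt fun hlt => (grade_strictMono hlt).ne hab)
      (fun h => (h.eq_of_not_lt fun hlt => (grade_strictMono hlt).ne hab.symm).symm)
  have hrange : s.image (grade ℕ) = range (grade ℕ (⊤ : α) + 1) := by
    ext j
    simp only [mem_image, mem_range]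
    constructor
    · rintro ⟨a, -, rfl⟩
      exact Nat.lt_succ_of_le (grade_mono le_top)
    · intro hj
      induction j with
      | zero => exact ⟨⊥, hs.bot_mem, grade_bot⟩
      | succ j ih =>
        obtain ⟨a, ha, rfl⟩ := ih (by omega)
        have hat : a < ⊤ := lt_top_iff_ne_top.2 fun h => by rw [h] at hj; omega
        obtain ⟨c, hc, hac⟩ := hs.exists_covBy_mem ha hs.top_mem hat
        exact ⟨c, hc, (Nat.covBy_iff_add_one_eq.1 (hac.grade ℕ)).symm⟩
  rw [← card_image_of_injOn hinj, hrange, card_range]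

end GradedChains

namespace Finpartition

variable {α : Type*} [DecidableEq α] {s : Finset α} {P Q R : Finpartition s} {b c : Finset α}

theorem part_subset_part_of_le (h : P ≤ Q) (a : α) : P.part a ⊆ Q.part a := by
  by_cases ha : a ∈ s
  · obtain ⟨D, hD, hPD⟩ := h (P.part_mem.2 ha)
    rwa [Q.part_eq_of_mem hD (hPD (P.mem_part ha))]
  · rw [P.part_eq_empty.2 ha]
    exact empty_subset _

theorem sup_part_eq {c D : Finset α} (hD : D ∈ Q.parts) (hc : c.Nonempty) (hcD : c ⊆ D) :
    c.sup Q.part = D := by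
  rw [sup_congr rfl fun x hx => Q.part_eq_of_mem hD (hcD hx), sup_const hc]

theorem sup_part_mem_of_le (h : P ≤ Q) {c : Finset α} (hc : c ∈ P.parts) :
    c.sup Q.part ∈ Q.parts := by
  obtain ⟨D, hD, hcD⟩ := h hc
  rwa [sup_part_eq hD (P.nonempty_of_mem_parts hc) hcD]

theorem biUnion_parts_subset (h : P ≤ Q) {C : Finset α} (hC : C ∈ Q.parts) :
    {B ∈ P.parts | B ⊆ C}.biUnion id = C := by
  ext a
  simp only [mem_biUnion, mem_filter, id]
  refine ⟨fun ⟨_, ⟨_, hBC⟩, haB⟩ => hBC haB, fun haC => ?_⟩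
  have has : a ∈ s := Q.subset hC haC
  exact ⟨P.part a, ⟨P.part_mem.2 has,
    (part_subset_part_of_le h a).trans (Q.part_eq_of_mem hC haC).subset⟩, P.mem_part has⟩

theorem eq_of_le_of_card_parts_le (h : P ≤ Q) (hcard : #P.parts ≤ #Q.parts) : P = Q := by
  refine le_antisymm h fun b hb => ?_
  -- sending a part of `P` to the part of `Q` containing it is onto, hence injective
  have hinj : Set.InjOn (fun c : Finset α => c.sup Q.part) P.parts :=
    injOn_of_surjOn_of_card_le _ (fun c hc => sup_part_mem_of_le h hc) (fun D hD => by
      obtain ⟨c, hc, hcD⟩ := exists_le_of_le h hD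
      exact ⟨c, hc, sup_part_eq hD (P.nonempty_of_mem_parts hc) hcD⟩) hcard
  have hsup : ∀ a ∈ b, (P.part a).sup Q.part = b := fun a ha =>
    sup_part_eq hb (P.part_nonempty.2 (Q.subset hb ha))
      ((part_subset_part_of_le h a).trans (Q.part_eq_of_mem hb ha).subset)
  obtain ⟨a, ha⟩ := Q.nonempty_of_mem_parts hb
  refine ⟨P.part a, P.part_mem.2 (Q.subset hb ha), fun a' ha' => ?_⟩
  have hpart : P.part a' = P.part a :=
    hinj (P.part_mem.2 (Q.subset hb ha')) (P.part_mem.2 (Q.subset hb ha))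
      ((hsup a' ha').trans (hsup a ha).symm)
  exact hpart ▸ P.mem_part (Q.subset hb ha')

theorem card_parts_lt_of_lt (h : P < Q) : #Q.parts < #P.parts :=
  (card_mono h.le).lt_of_not_ge fun hc => h.ne (eq_of_le_of_card_parts_le h.le hc)

def mergeParts (hb : b ∈ P.parts) (hc : c ∈ P.parts) : Finpartition s :=
  ofExistsUnique (insert (b ∪ c) ((P.parts.erase b).erase c))
    (by
      simp only [mem_insert, mem_erase]
      rintro d (rfl | ⟨-, -, hd⟩)
      · exact union_subset (P.subset hb) (P.subset hc)
      · exact P.subset hd)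
    (fun a ha => by
      by_cases habc : a ∈ b ∪ c
      · refine ⟨b ∪ c, ⟨mem_insert_self _ _, habc⟩, fun t ⟨ht, hat⟩ => ?_⟩
        simp only [mem_insert, mem_erase] at ht
        obtain rfl | ⟨htc, htb, ht⟩ := ht
        · rfl
        · rcases mem_union.1 habc with hab | hac
          · exact absurd (P.eq_of_mem_parts ht hb hat hab) htb
          · exact absurd (P.eq_of_mem_parts ht hc hat hac) htc
      · have hab : P.part a ≠ b := fun h => habc (mem_union_left _ (h ▸ P.mem_part ha))
        have hac : P.part a ≠ c := fun h => habc (mem_union_right _ (h ▸ P.mem_part ha))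
        refine ⟨P.part a, ⟨mem_insert_of_mem (mem_erase.2 ⟨hac, mem_erase.2 ⟨hab,
          P.part_mem.2 ha⟩⟩), P.mem_part ha⟩, fun t ⟨ht, hat⟩ => ?_⟩
        simp only [mem_insert, mem_erase] at ht
        obtain rfl | ⟨-, -, ht⟩ := ht
        · exact absurd hat habc
        · exact (P.part_eq_of_mem ht hat).symm)
    (by
      have := (P.nonempty_of_mem_parts hb).mono (subset_union_left (s₂ := c))
      grind [Finpartition.empty_notMem_parts])

theorem mem_mergeParts {d : Finset α} (hb : b ∈ P.parts) (hc : c ∈ P.parts) :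
    d ∈ (mergeParts hb hc).parts ↔ d = b ∪ c ∨ d ≠ c ∧ d ≠ b ∧ d ∈ P.parts := by
  simp [mergeParts]

theorem le_mergeParts (hb : b ∈ P.parts) (hc : c ∈ P.parts) : P ≤ mergeParts hb hc :=
    fun d hd => by
  by_cases hdb : d = b
  · exact ⟨b ∪ c, (mem_mergeParts hb hc).2 (Or.inl rfl), hdb ▸ subset_union_left⟩
  by_cases hdc : d = c
  · exact ⟨b ∪ c, (mem_mergeParts hb hc).2 (Or.inl rfl), hdc ▸ subset_union_right⟩
  exact ⟨d, (mem_mergeParts hb hc).2 (Or.inr ⟨hdc, hdb, hd⟩), le_rfl⟩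

theorem mergeParts_le (hb : b ∈ P.parts) (hc : c ∈ P.parts) (h : P ≤ R) {d : Finset α}
    (hd : d ∈ R.parts) (hbd : b ⊆ d) (hcd : c ⊆ d) : mergeParts hb hc ≤ R := fun e he => by
  rcases (mem_mergeParts hb hc).1 he with rfl | ⟨-, -, he⟩
  · exact ⟨d, hd, union_subset hbd hcd⟩
  · exact h he

theorem card_parts_mergeParts (hb : b ∈ P.parts) (hc : c ∈ P.parts) (hbc : b ≠ c) :
    #(mergeParts hb hc).parts + 1 = #P.parts := by
  have hnotMem : b ∪ c ∉ (P.parts.erase b).erase c := fun h => by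
    simp only [mem_erase] at h
    obtain ⟨-, hne, hmem⟩ := h
    obtain ⟨x, hx⟩ := P.nonempty_of_mem_parts hb
    exact hne (P.eq_of_mem_parts hmem hb (mem_union_left _ hx) hx)
  have hlt : 1 < #P.parts := one_lt_card.2 ⟨b, hb, c, hc, hbc⟩
  rw [mergeParts, ofExistsUnique_parts, card_insert_of_notMem hnotMem,
    card_erase_of_mem (mem_erase.2 ⟨hbc.symm, hc⟩), card_erase_of_mem hb]
  omega

theorem exists_le_le_card_parts_add_one (h : P ≤ R) (hcard : #R.parts + 1 < #P.parts) :
    ∃ Q : Finpartition s, P ≤ Q ∧ Q ≤ R ∧ #Q.parts + 1 = #P.parts := by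
  obtain ⟨b, hb, c, hc, hbc, hsup⟩ := exists_ne_map_eq_of_card_lt_of_maps_to
    (f := fun d => d.sup R.part) (by omega) fun d hd => sup_part_mem_of_le h hd
  obtain ⟨D, hD, hbD⟩ := h hb
  obtain ⟨D', hD', hcD'⟩ := h hc
  have hDD' : D = D' := by
    rw [← sup_part_eq hD (P.nonempty_of_mem_parts hb) hbD,
      ← sup_part_eq hD' (P.nonempty_of_mem_parts hc) hcD']
    exact hsup
  subst hDD'
  exact ⟨mergeParts hb hc, le_mergeParts hb hc, mergeParts_le hb hc h hD hbD hcD',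
    card_parts_mergeParts hb hc hbc⟩

theorem parts_top_univ (α : Type*) [Fintype α] [DecidableEq α] [Nonempty α] :
    (⊤ : Finpartition (univ : Finset α)).parts = {univ} :=
  (parts_nonempty _ univ_nonempty.ne_empty).subset_singleton_iff.1 (parts_top_subset _)

theorem exists_perm_mem_of_card_eq [Fintype α] (P : Finpartition (univ : Finset α))
    (f : Finset α → Finset α) (hcard : ∀ b ∈ P.parts, #(f b) = #b)
    (hdisj : (P.parts : Set (Finset α)).PairwiseDisjoint f) :
    ∃ σ : Equiv.Perm α, ∀ a, σ a ∈ f (P.part a) := by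
  let e : ∀ b ∈ P.parts, b ≃ f b := fun b hb => Finset.equivOfCardEq (hcard b hb).symm
  let g : α → α := fun a =>
    e (P.part a) (P.part_mem.2 (mem_univ a)) ⟨a, P.mem_part (mem_univ a)⟩
  have hg : ∀ a, g a ∈ f (P.part a) := fun a => (e _ (P.part_mem.2 (mem_univ a)) _).2
  have hinj : Function.Injective g := by
    intro a a' h
    by_cases hpart : P.part a = P.part a'
    · simp only [g] at h
      generalize_proofs hb ha at h
      generalize P.part a = b at hb ha h hpart
      subst hpart
      exact congrArg Subtype.val ((e _ hb).injective (Subtype.ext h))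
    · exact (disjoint_left.1 (hdisj (P.part_mem.2 (mem_univ a)) (P.part_mem.2 (mem_univ a'))
        hpart) (hg a) (h ▸ hg a')).elim
  exact ⟨Equiv.ofBijective g (Finite.injective_iff_bijective.1 hinj), hg⟩

end Finpartition

namespace VPart

variable {n s : ℕ} {x y : VPart n s}

theorem w_pairwiseDisjoint (x : VPart n s) (i : Fin s) :
    (x.P.parts : Set (Finset (Fin n))).PairwiseDisjoint (x.w i) := fun _ hB _ hB' hne =>
  disjoint_left.2 fun a haB haB' => hne ((x.part_w i a).unique ⟨hB, haB⟩ ⟨hB', haB'⟩)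

theorem eq_of_le_of_P_eq (h : x ≤ y) (hP : x.P = y.P) : x = y := by
  refine ext' hP (funext₂ fun i B => ?_)
  by_cases hB : B ∈ x.P.parts
  · refine eq_of_subset_of_card_le (h.2 i B hB B (hP ▸ hB) subset_rfl) ?_
    rw [x.card_w i B hB, y.card_w i B (hP ▸ hB)]
  · rw [x.w_junk i B hB, y.w_junk i B (hP ▸ hB)]

theorem card_parts_lt_of_lt (h : x < y) : #y.P.parts < #x.P.parts :=
  Finpartition.card_parts_lt_of_lt <|
    h.le.1.lt_of_ne fun hP => h.ne (eq_of_le_of_P_eq h.le hP)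

theorem card_parts_le (x : VPart n s) : #x.P.parts ≤ n := by
  simpa using x.P.card_parts_le_card

theorem lt_of_le_of_card_parts_ne (h : x ≤ y) (hcard : #x.P.parts ≠ #y.P.parts) : x < y :=
  h.lt_of_ne fun hxy => hcard (hxy ▸ rfl)

def coarsen (x : VPart n s) (Q : Finpartition (univ : Finset (Fin n))) (hQ : x.P ≤ Q) :
    VPart n s where
  P := Q
  w i C := if C ∈ Q.parts then {B ∈ x.P.parts | B ⊆ C}.biUnion (x.w i) else ∅
  card_w i C hC := by
    calc #(ite _ _ _) = ∑ B ∈ x.P.parts with B ⊆ C, #B := by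
          rw [if_pos hC, card_biUnion ((x.w_pairwiseDisjoint i).subset (filter_subset _ _))]
          exact sum_congr rfl fun B hB => x.card_w i B (mem_filter.1 hB).1
      _ = #({B ∈ x.P.parts | B ⊆ C}.biUnion id) :=
          (card_biUnion (x.P.disjoint.subset (filter_subset _ _))).symm
      _ = #C := by rw [Finpartition.biUnion_parts_subset hQ hC]
  part_w i a := by
    obtain ⟨B, ⟨hB, haB⟩, huniq⟩ := x.part_w i a
    obtain ⟨C, hC, hBC⟩ := hQ hB
    refine ⟨C, ⟨hC, ?_⟩, fun C' ⟨hC', haC'⟩ => ?_⟩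
    · rw [if_pos hC]
      exact mem_biUnion.2 ⟨B, mem_filter.2 ⟨hB, hBC⟩, haB⟩
    · rw [if_pos hC', mem_biUnion] at haC'
      obtain ⟨B', hB', haB'⟩ := haC'
      obtain rfl := huniq B' ⟨(mem_filter.1 hB').1, haB'⟩
      obtain ⟨b, hb⟩ := x.P.nonempty_of_mem_parts hB
      exact Q.eq_of_mem_parts hC' hC ((mem_filter.1 hB').2 hb) (hBC hb)
  w_junk _ _ hC := if_neg hC

section Coarsen

variable {Q : Finpartition (univ : Finset (Fin n))} (hQ : x.P ≤ Q)

theorem coarsen_P : (x.coarsen Q hQ).P = Q := rfl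

theorem coarsen_w {C : Finset (Fin n)} (hC : C ∈ Q.parts) (i : Fin s) :
    (x.coarsen Q hQ).w i C = {B ∈ x.P.parts | B ⊆ C}.biUnion (x.w i) :=
  if_pos hC

theorem le_coarsen : x ≤ x.coarsen Q hQ :=
  ⟨hQ, fun i B hB C hC hBC => by
    rw [coarsen_w hQ hC]
    exact subset_biUnion_of_mem _ (mem_filter.2 ⟨hB, hBC⟩)⟩

theorem coarsen_le (hxy : x ≤ y) (hQy : Q ≤ y.P) : x.coarsen Q hQ ≤ y :=
  ⟨hQy, fun i C hC D hD hCD => by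
    rw [coarsen_w hQ hC]
    exact biUnion_subset.2 fun B hB =>
      hxy.2 i B (mem_filter.1 hB).1 D hD ((mem_filter.1 hB).2.trans hCD)⟩

end Coarsen

theorem exists_lt_lt_of_card_parts_add_one_lt (hxy : x ≤ y)
    (hcard : #y.P.parts + 1 < #x.P.parts) : ∃ z, x < z ∧ z < y := by
  obtain ⟨Q, hxQ, hQy, hQ⟩ := Finpartition.exists_le_le_card_parts_add_one hxy.1 hcard
  refine ⟨x.coarsen Q hxQ, lt_of_le_of_card_parts_ne (le_coarsen hxQ) ?_,
    lt_of_le_of_card_parts_ne (coarsen_le hxQ hxy hQy) ?_⟩ <;>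
  · rw [coarsen_P]
    omega

def ofPerm (σ : Fin s → Equiv.Perm (Fin n)) : VPart n s where
  P := ⊥
  w i B :=
    if B ∈ (⊥ : Finpartition (univ : Finset (Fin n))).parts then B.map (σ i).toEmbedding
    else ∅
  card_w i B hB := by rw [if_pos hB, card_map]
  part_w i a := by
    have hsingleton : ∀ k : Fin n, {k} ∈ (⊥ : Finpartition (univ : Finset (Fin n))).parts :=
      fun k => Finpartition.mem_bot_iff.2 ⟨k, mem_univ k, rfl⟩
    refine ⟨{(σ i).symm a}, ⟨hsingleton _, by simp⟩, ?_⟩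
    rintro B ⟨hB, haB⟩
    obtain ⟨k, -, rfl⟩ := Finpartition.mem_bot_iff.1 hB
    simp only [if_pos hB, map_singleton, Equiv.coe_toEmbedding, mem_singleton] at haB
    simp [haB]
  w_junk _ _ hB := if_neg hB

theorem card_parts_ofPerm (σ : Fin s → Equiv.Perm (Fin n)) : #(ofPerm σ).P.parts = n := by
  simp [ofPerm]

theorem ofPerm_w_singleton (σ : Fin s → Equiv.Perm (Fin n)) (i : Fin s) (k : Fin n) :
    (ofPerm σ).w i {k} = {σ i k} := by
  simp [ofPerm]

theorem ofPerm_le {σ : Fin s → Equiv.Perm (Fin n)}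
    (hσ : ∀ i k, σ i k ∈ x.w i (x.P.part k)) : ofPerm σ ≤ x :=
  ⟨bot_le, fun i B hB B' hB' hBB' => by
    obtain ⟨k, -, rfl⟩ := Finpartition.mem_bot_iff.1 hB
    rw [ofPerm_w_singleton, singleton_subset_iff,
      ← x.P.part_eq_of_mem hB' (hBB' (mem_singleton_self k))]
    exact hσ i k⟩

theorem exists_lt_of_card_parts_lt (hx : #x.P.parts < n) : ∃ z, z < x := by
  choose σ hσ using fun i =>
    Finpartition.exists_perm_mem_of_card_eq x.P (x.w i) (x.card_w i) (x.w_pairwiseDisjoint i)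
  refine ⟨ofPerm σ, lt_of_le_of_card_parts_ne (ofPerm_le hσ) ?_⟩
  rw [card_parts_ofPerm]
  omega

instance [NeZero n] : OrderTop (VPart n s) where
  top :=
    { P := ⊤
      w _ B := if B ∈ (⊤ : Finpartition (univ : Finset (Fin n))).parts then univ else ∅
      card_w _ B hB := by simp_all [Finpartition.parts_top_univ]
      part_w _ a := ⟨univ, by simp [Finpartition.parts_top_univ],
        fun _ hB => by simp_all [Finpartition.parts_top_univ]⟩
      w_junk _ _ hB := if_neg hB }
  le_top x := ⟨le_top, fun i B _ C hC _ => by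
    change x.w i B ⊆ ite (C ∈ (⊤ : Finpartition (univ : Finset (Fin n))).parts) _ _
    rw [if_pos hC]
    exact subset_univ _⟩

theorem top_P [NeZero n] : (⊤ : VPart n s).P = ⊤ := rfl

theorem top_w [NeZero n] {B : Finset (Fin n)} (hB : B ∈ (⊤ : VPart n s).P.parts) (i : Fin s) :
    (⊤ : VPart n s).w i B = univ :=
  if_pos hB

theorem card_parts_top [NeZero n] : #(⊤ : VPart n s).P.parts = 1 := by
  rw [top_P, Finpartition.parts_top_univ, card_singleton]

def rank : WithBot (VPart n s) → ℕ
  | ⊥ => 0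
  | (x : VPart n s) => n + 1 - #x.P.parts

theorem rank_strictMono : StrictMono (rank : WithBot (VPart n s) → ℕ) := by
  intro a b hab
  induction b using WithBot.recBotCoe with
  | bot => exact absurd hab not_lt_bot
  | coe y =>
    induction a using WithBot.recBotCoe with
    | bot =>
      have := card_parts_le y
      simp only [rank]
      omega
    | coe x =>
      have := card_parts_lt_of_lt (WithBot.coe_lt_coe.1 hab)
      have := card_parts_le x
      simp only [rank]
      omega

theorem rank_eq_of_covBy {a b : WithBot (VPart n s)} (hab : a ⋖ b) : rank b = rank a + 1 := by
  induction b using WithBot.recBotCoe with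
  | bot => exact absurd hab.lt not_lt_bot
  | coe y =>
    induction a using WithBot.recBotCoe with
    | bot =>
      have hy : #y.P.parts = n := (card_parts_le y).eq_of_not_lt fun hlt => by
        obtain ⟨z, hz⟩ := exists_lt_of_card_parts_lt hlt
        exact hab.2 (WithBot.bot_lt_coe z) (WithBot.coe_lt_coe.2 hz)
      simp only [rank]
      omega
    | coe x =>
      have hxy := WithBot.coe_lt_coe.1 hab.lt
      have hgap : ¬ #y.P.parts + 1 < #x.P.parts := fun hgap => by
        obtain ⟨z, hxz, hzy⟩ := exists_lt_lt_of_card_parts_add_one_lt hxy.le hgap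
        exact hab.2 (WithBot.coe_lt_coe.2 hxz) (WithBot.coe_lt_coe.2 hzy)
      have := card_parts_lt_of_lt hxy
      have := card_parts_le x
      simp only [rank]
      omega

instance : GradeMinOrder ℕ (WithBot (VPart n s)) where
  grade := rank
  grade_strictMono := rank_strictMono
  covBy_grade _ _ hab := Nat.covBy_iff_add_one_eq.2 (rank_eq_of_covBy hab).symm
  isMin_grade a ha := by
    rw [ha.eq_bot]
    exact isMin_bot

theorem grade_top [NeZero n] : grade ℕ (⊤ : WithBot (VPart n s)) = n := by
  change n + 1 - #(⊤ : VPart n s).P.parts = n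
  rw [card_parts_top]
  omega

end VPart

/-- `Π_{n,s+1}` is graded: it is bounded, with greatest element
`([n],...,[n])`, and every maximal chain has the same length `n`
(i.e. has `n+1` elements). -/
theorem statement2 (n s : ℕ) (hn : 1 ≤ n) :
    (∃ x : VPart n s, x.P = ⊤ ∧ (∀ (i : Fin s), ∀ B ∈ x.P.parts, x.w i B = Finset.univ) ∧
      IsTop (x : WithBot (VPart n s))) ∧
    ∀ S : Finset (WithBot (VPart n s)),
      IsMaxChain (fun a b => a ≤ b) (S : Set (WithBot (VPart n s))) -> S.card = n + 1 := by
  have : NeZero n := ⟨by omega⟩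
  refine ⟨⟨⊤, VPart.top_P, fun i _ hB => VPart.top_w hB i, isTop_top⟩, fun S hS => ?_⟩
  rw [hS.card_eq_grade_top_add_one, VPart.grade_top]
end

section
/- With the labeling λ of Π_{n,s+1}, any maximal chain from 0̂ to the top element ([n],...,[n]) that contains an edge x ⋖ y with A(x) ≠ A(y) above the bottom edge is not strictly increasing; in particular, the unique increasing maximal chain of Π_{n,s+1} passes through the lexicographically least atom and has all its labels above the bottom edge of the form (n, *, *). -/
open Finset

/-- labels: `ℤ × ℤ × ℤ` with the lexicographic order -/
abbrev Lbl : Type := ℤ ×ₗ ℤ ×ₗ ℤ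

def mkLbl (a b c : ℤ) : Lbl := toLex (a, toLex (b, c))

namespace VPart

variable {n s : ℕ}

set_option maxHeartbeats 1000000 in
open scoped Classical in
/-- the `(k,i,j)` label for an edge with distinct atom words (1-based) -/
noncomputable def firstDiff (x y : VPart n s) : Lbl :=
  let D : Finset (Fin n × Fin s) :=
    Finset.univ.filter fun p => atomWord x p.2 p.1 ≠ atomWord y p.2 p.1
  if h : D.Nonempty then
    have hk : (D.image Prod.fst).Nonempty := h.image _
    let k := (D.image Prod.fst).min' hk
    have hk2 : ((D.filter fun p => p.1 = k).image Prod.snd).Nonempty := by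
      obtain ⟨p, hp, hpk⟩ := Finset.mem_image.mp ((D.image Prod.fst).min'_mem hk)
      exact ⟨p.2, Finset.mem_image.mpr ⟨p, Finset.mem_filter.mpr ⟨hp, hpk⟩, rfl⟩⟩
    let i := ((D.filter fun p => p.1 = k).image Prod.snd).min' hk2
    mkLbl ((k : ℕ) + 1) ((i : ℕ) + 1) ((atomWord y i k : ℕ) + 1)
  else mkLbl 0 0 0

/-- the maximum (1-based) of the union of the two merged parts -/
noncomputable def mergeMax (x y : VPart n s) : ℤ :=
  ((y.P.parts \ x.P.parts).sup fun B => B.sup fun t => (t : ℕ) + 1 : ℕ)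

/-- the (1-based) index of an atom in the lexicographic order on atoms -/
noncomputable def atomIndex (a : VPart n s) : ℤ :=
  (Nat.card {a' : VPart n s // a'.IsAtomic ∧ wordLe (atomWord a') (atomWord a)} : ℤ)

/-- The edge labeling `λ` of `Π_{n,s+1}` (on arbitrary pairs; only its values on
covering pairs are relevant). -/
noncomputable def lam : WithBot (VPart n s) → WithBot (VPart n s) → Lbl
  | ⊥, (y : VPart n s) => mkLbl ((n : ℤ) - 1) (s + atomIndex y) 0
  | (x : VPart n s), (y : VPart n s) =>
      if atomWord x = atomWord y then mkLbl n (mergeMax x y) 0 else firstDiff x y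
  | _, _ => mkLbl 0 0 0

end VPart

/-!
The bottom edge `0̂ ⋖ a` is labelled `(n - 1, s + m, 0)` with `m ≥ 1`, whereas an edge `x ⋖ y`
with `A(x) ≠ A(y)` is labelled `(k, i, j)` with `i ≤ s`, where `k` is the first position at which
the atom words differ. So the latter label can only exceed the former if `k = n`; but every
component of an atom word is a permutation of `[n]`, so words agreeing at all positions before
`n` agree at `n` too. Hence along an increasing chain the atom word is constant above the bottom
edge, and equals the atom word of the top element, which is the identity word, the
lexicographically least one.
-/

theorem Finset.getD_sort_card_filter_lt {α : Type*} [LinearOrder α] {B : Finset α} {k : α}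
    (hk : k ∈ B) (d : α) : (B.sort (· ≤ ·)).getD #(B.filter (· < k)) d = k := by
  set f := B.orderEmbOfFin rfl
  obtain ⟨i, rfl⟩ : k ∈ Set.range f := by rwa [Finset.range_orderEmbOfFin]
  have hfilter : B.filter (· < f i) = (Finset.univ.filter (· < i)).map f.toEmbedding := by
    ext b
    constructor
    · intro hb
      obtain ⟨j, rfl⟩ : b ∈ Set.range f := by
        rw [Finset.range_orderEmbOfFin]; exact (Finset.mem_filter.mp hb).1
      simpa using (Finset.mem_filter.mp hb).2
    · simp only [Finset.mem_map, Finset.mem_filter_univ, RelEmbedding.coe_toEmbedding]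
      rintro ⟨j, hj, rfl⟩
      exact Finset.mem_filter.mpr ⟨B.orderEmbOfFin_mem rfl j, f.lt_iff_lt.mpr hj⟩
  rw [hfilter, Finset.card_map, Finset.filter_gt_eq_Iio, Fin.card_Iio,
    List.getD_eq_getElem _ _ (by simp)]
  rfl

theorem Finset.strictMonoOn_card_filter_lt {α : Type*} [LinearOrder α] (B : Finset α) :
    StrictMonoOn (fun k => #(B.filter (· < k))) B := by
  intro k hk k' _ hlt
  refine Finset.card_lt_card ⟨Finset.monotone_filter_right B fun _ _ h => h.trans hlt, fun h => ?_⟩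
  simpa using h (Finset.mem_filter.mpr ⟨hk, hlt⟩)

theorem Function.Injective.eq_of_forall_ne_eq {α : Type*} [Finite α] {f g : α → α}
    (hf : f.Injective) (hg : g.Injective) (a : α) (h : ∀ b ≠ a, f b = g b) : f = g := by
  funext b
  by_cases hba : b = a
  · subst hba
    obtain ⟨c, hc⟩ := Finite.injective_iff_surjective.mp hg (f b)
    by_cases hcb : c = b
    · rw [← hc, hcb]
    · exact absurd (hf ((h c hcb).trans hc)) hcb
  · exact h b hba

theorem le_apply_of_forall_lt_apply_eq {α : Type*} [LinearOrder α] {f : α → α}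
    (hf : f.Injective) {k : α} (h : ∀ k' < k, f k' = k') : k ≤ f k :=
  not_lt.mp fun hlt => hlt.ne (hf (h _ hlt))

namespace VPart

variable {n s : ℕ}

theorem partOf_mem (x : VPart n s) (k : Fin n) : x.partOf k ∈ x.P.parts :=
  x.P.part_mem.mpr (Finset.mem_univ k)

theorem mem_partOf (x : VPart n s) (k : Fin n) : k ∈ x.partOf k :=
  x.P.mem_part (Finset.mem_univ k)

theorem card_filter_lt_lt_length_sort (x : VPart n s) (i : Fin s) (k : Fin n) :
    #((x.partOf k).filter (· < k)) < ((x.w i (x.partOf k)).sort (· ≤ ·)).length := by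
  rw [Finset.length_sort, x.card_w i _ (partOf_mem x k)]
  exact Finset.card_lt_card (Finset.filter_ssubset.mpr ⟨k, mem_partOf x k, lt_irrefl k⟩)

theorem atomWord_eq_getElem (x : VPart n s) (i : Fin s) (k : Fin n) :
    atomWord x i k = ((x.w i (x.partOf k)).sort (· ≤ ·))[#((x.partOf k).filter (· < k))]'
      (card_filter_lt_lt_length_sort x i k) :=
  List.getD_eq_getElem _ _ _

theorem atomWord_mem (x : VPart n s) (i : Fin s) (k : Fin n) :
    atomWord x i k ∈ x.w i (x.partOf k) := by
  rw [atomWord_eq_getElem, ← Finset.mem_sort (· ≤ ·)]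
  exact List.getElem_mem _

theorem atomWord_eq_self {x : VPart n s} {i : Fin s} {k : Fin n}
    (h : x.w i (x.partOf k) = x.partOf k) : atomWord x i k = k := by
  unfold atomWord
  rw [h]
  exact Finset.getD_sort_card_filter_lt (mem_partOf x k) k

theorem atomWord_injective (x : VPart n s) (i : Fin s) : Function.Injective (atomWord x i) := by
  intro k k' h
  by_cases hpart : x.partOf k = x.partOf k'
  · have hk := mem_partOf x k
    rw [hpart] at hk
    refine (x.partOf k').strictMonoOn_card_filter_lt.injOn hk (mem_partOf x k') ?_
    have hlen := card_filter_lt_lt_length_sort x i k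
    rw [atomWord_eq_getElem, atomWord_eq_getElem] at h
    simp only [hpart] at h hlen
    exact (Finset.sort_nodup _ _).getElem_inj_iff.mp h
  · refine absurd ((x.part_w i (atomWord x i k')).unique ⟨partOf_mem x k, ?_⟩
      ⟨partOf_mem x k', atomWord_mem x i k'⟩) hpart
    exact h ▸ atomWord_mem x i k

theorem atomWord_bijective (x : VPart n s) (i : Fin s) : Function.Bijective (atomWord x i) :=
  Finite.injective_iff_bijective.mp (atomWord_injective x i)

def ofPartition (P : Finpartition (Finset.univ : Finset (Fin n))) : VPart n s where
  P := P
  w _ B := if B ∈ P.parts then B else ∅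
  card_w i B hB := by rw [if_pos hB]
  part_w i x := by
    obtain ⟨B, hB, hxB⟩ := P.exists_mem (Finset.mem_univ x)
    refine ⟨B, ⟨hB, by rwa [if_pos hB]⟩, ?_⟩
    rintro B' ⟨hB', hxB'⟩
    rw [if_pos hB'] at hxB'
    exact P.eq_of_mem_parts hB' hB hxB' hxB
  w_junk i B hB := if_neg hB

theorem atomWord_ofPartition (P : Finpartition (Finset.univ : Finset (Fin n))) :
    atomWord (ofPartition (s := s) P) = fun _ k => k :=
  funext fun _ => funext fun k => atomWord_eq_self (if_pos (partOf_mem _ k))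

theorem isAtomic_ofPartition_bot :
    (ofPartition (s := s) (⊥ : Finpartition (Finset.univ : Finset (Fin n)))).IsAtomic := by
  intro B hB
  obtain ⟨a, -, rfl⟩ := Finpartition.mem_bot_iff.mp hB
  exact Finset.card_singleton a

theorem atomWord_eq_id_of_isTop {T : VPart n s} (hT : IsTop T) : atomWord T = fun _ k => k := by
  have hP : T.P = ⊤ := top_le_iff.mp (hT (ofPartition ⊤)).1
  funext i k
  have hmem := partOf_mem T k
  have hpart : T.partOf k = Finset.univ :=
    Finset.mem_singleton.mp (Finpartition.parts_top_subset _ (hP ▸ hmem))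
  refine atomWord_eq_self ?_
  rw [hpart] at hmem ⊢
  exact Finset.eq_univ_of_card _ (by rw [T.card_w i _ hmem, Finset.card_univ])

theorem wordLe_id {W : Fin s → Fin n → Fin n} (hW : ∀ i, Function.Injective (W i)) :
    wordLe (fun _ k => k) W := by
  by_cases h : ∀ i k, W i k = k
  · exact Or.inr (funext fun i => funext fun k => (h i k).symm)
  simp only [not_forall] at h
  obtain ⟨p, hp, hmin⟩ := wellFounded_lt.has_min
    {p : Fin s ×ₗ Fin n | W (ofLex p).1 (ofLex p).2 ≠ (ofLex p).2}
    (by obtain ⟨i, k, hik⟩ := h; exact ⟨toLex (i, k), hik⟩)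
  obtain ⟨i, k⟩ := p
  have hfix : ∀ i' k', (i' < i ∨ (i' = i ∧ k' < k)) → W i' k' = k' := fun i' k' h' =>
    not_not.mp fun hne => hmin (toLex (i', k')) hne (Prod.Lex.toLex_lt_toLex.mpr h')
  have hle : k ≤ W i k :=
    le_apply_of_forall_lt_apply_eq (hW i) fun k' hk' => hfix i k' (Or.inr ⟨rfl, hk'⟩)
  exact Or.inl ⟨i, k, lt_of_le_of_ne hle (Ne.symm hp), fun i' k' h' => (hfix i' k' h').symm⟩

instance : Finite (VPart n s) :=
  Finite.of_injective (fun x => (x.P, x.w)) fun _ _ h =>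
    ext' (congrArg Prod.fst h) (congrArg Prod.snd h)

theorem one_le_atomIndex (y : VPart n s) : 1 ≤ atomIndex y := by
  have : Nonempty {a : VPart n s // a.IsAtomic ∧ wordLe (atomWord a) (atomWord y)} :=
    ⟨⟨ofPartition ⊥, isAtomic_ofPartition_bot,
      (atomWord_ofPartition _).symm ▸ wordLe_id (atomWord_injective y)⟩⟩
  unfold atomIndex
  exact_mod_cast Nat.card_pos

def atomOf (x : VPart n s) : VPart n s where
  P := ⊥
  w i B := if B ∈ (⊥ : Finpartition (Finset.univ : Finset (Fin n))).parts
    then B.image (atomWord x i) else ∅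
  card_w i B hB := by
    rw [if_pos hB]
    exact Finset.card_image_of_injective _ (atomWord_injective x i)
  part_w i t := by
    obtain ⟨k, rfl⟩ := (atomWord_bijective x i).surjective t
    have hk : {k} ∈ (⊥ : Finpartition (Finset.univ : Finset (Fin n))).parts :=
      Finpartition.mem_bot_iff.mpr ⟨k, Finset.mem_univ k, rfl⟩
    refine ⟨{k}, ⟨hk, by simp⟩, ?_⟩
    rintro B ⟨hB, hkB⟩
    obtain ⟨a, -, rfl⟩ := Finpartition.mem_bot_iff.mp hB
    rw [if_pos hB, Finset.image_singleton, Finset.mem_singleton] at hkB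
    rw [atomWord_injective x i hkB]
  w_junk i B hB := if_neg hB

theorem isAtomic_atomOf (x : VPart n s) : (atomOf x).IsAtomic := by
  intro B hB
  obtain ⟨a, -, rfl⟩ := Finpartition.mem_bot_iff.mp hB
  exact Finset.card_singleton a

theorem atomOf_le (x : VPart n s) : atomOf x ≤ x := by
  refine ⟨bot_le, fun i B (hB : B ∈ (⊥ : Finpartition _).parts) B' hB' hBB' => ?_⟩
  obtain ⟨k, -, rfl⟩ := Finpartition.mem_bot_iff.mp hB
  have hpart : x.partOf k = B' := x.P.part_eq_of_mem hB' (hBB' (Finset.mem_singleton_self k))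
  show (if _ then _ else _) ⊆ x.w i B'
  rw [if_pos hB, Finset.image_singleton, Finset.singleton_subset_iff, ← hpart]
  exact atomWord_mem x i k

theorem isAtomic_of_bot_covBy {a : VPart n s} (h : ⊥ ⋖ (a : WithBot (VPart n s))) :
    a.IsAtomic := by
  have : atomOf a = a := by
    by_contra hne
    exact h.2 (WithBot.bot_lt_coe _) (WithBot.coe_lt_coe.mpr ((atomOf_le a).lt_of_ne hne))
  exact this ▸ isAtomic_atomOf a

theorem lam_coe_coe_of_atomWord_eq {x y : VPart n s} (h : atomWord x = atomWord y) :
    lam (x : WithBot (VPart n s)) y = mkLbl n (mergeMax x y) 0 :=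
  if_pos h

theorem lam_coe_coe_of_atomWord_ne {x y : VPart n s} (h : atomWord x ≠ atomWord y) :
    lam (x : WithBot (VPart n s)) y = firstDiff x y :=
  if_neg h

theorem exists_firstDiff_eq {x y : VPart n s} (h : atomWord x ≠ atomWord y) :
    ∃ (k : Fin n) (i : Fin s) (j : ℤ), firstDiff x y = mkLbl ((k : ℕ) + 1) ((i : ℕ) + 1) j ∧
      ∀ k' < k, ∀ i', atomWord x i' k' = atomWord y i' k' := by
  classical
  have hD : (Finset.univ.filter fun p : Fin n × Fin s =>
      atomWord x p.2 p.1 ≠ atomWord y p.2 p.1).Nonempty := by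
    rw [Finset.filter_nonempty_iff]
    by_contra! hD
    exact h (funext fun i => funext fun k => hD (k, i) (Finset.mem_univ _))
  unfold firstDiff
  rw [dif_pos hD]
  refine ⟨_, _, _, rfl, fun k' hk' i' => not_not.mp fun hne => (Finset.min'_le _ _ ?_).not_gt hk'⟩
  exact Finset.mem_image.mpr ⟨(k', i'), Finset.mem_filter.mpr ⟨Finset.mem_univ _, hne⟩, rfl⟩

theorem not_lam_bot_lt_of_atomWord_ne {x y : VPart n s} (h : atomWord x ≠ atomWord y)
    (z : VPart n s) : ¬ lam ⊥ (z : WithBot (VPart n s)) < lam x (y : WithBot (VPart n s)) := by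
  obtain ⟨k, i, j, hfd, hagree⟩ := exists_firstDiff_eq h
  rw [lam_coe_coe_of_atomWord_ne h, hfd]
  intro hlt
  simp only [lam, mkLbl, Prod.Lex.toLex_lt_toLex] at hlt
  have hz := one_le_atomIndex z
  have hk := k.isLt
  have hi := i.isLt
  rcases hlt with hlast | ⟨_, hlt⟩
  · -- `k` is the last position; the components of atom words are permutations, so agreeing
    -- everywhere else they agree at `k` too.
    refine h (funext fun i' => (atomWord_injective x i').eq_of_forall_ne_eq
      (atomWord_injective y i') k fun k' hk' => hagree k' ?_ i')
    have := k'.isLt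
    have := Fin.val_ne_of_ne hk'
    rw [Fin.lt_def]
    omega
  · rcases hlt with hlt | ⟨hlt, -⟩ <;> omega

section Chain

variable {c : Fin (n + 1) → WithBot (VPart n s)}

theorem ne_bot_of_ne_zero (hcov : ∀ e : Fin n, c e.castSucc ⋖ c e.succ) {j : Fin (n + 1)}
    (hj : j ≠ 0) : c j ≠ ⊥ := by
  obtain ⟨e, rfl⟩ := Fin.exists_succ_eq.mpr hj
  exact ne_bot_of_gt (hcov e).lt

theorem atomWord_eq_of_strictMono_lam (h0 : c 0 = ⊥)
    (hcov : ∀ e : Fin n, c e.castSucc ⋖ c e.succ)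
    (hmono : StrictMono fun e : Fin n => lam (c e.castSucc) (c e.succ))
    {e : Fin n} (he : 1 ≤ (e : ℕ)) {x y : VPart n s} (hx : c e.castSucc = x)
    (hy : c e.succ = y) : atomWord x = atomWord y := by
  by_contra h
  let e₀ : Fin n := ⟨0, by omega⟩
  obtain ⟨z, hz⟩ := WithBot.ne_bot_iff_exists.mp (ne_bot_of_gt (hcov e₀).lt)
  have hlt : lam (c e₀.castSucc) (c e₀.succ) < lam (c e.castSucc) (c e.succ) :=
    hmono (Fin.lt_def.mpr he)
  rw [hx, hy, ← hz, show e₀.castSucc = 0 from rfl, h0] at hlt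
  exact not_lam_bot_lt_of_atomWord_ne h z hlt

theorem atomWord_eq_of_strictMono_lam_of_ne_zero (h0 : c 0 = ⊥)
    (hcov : ∀ e : Fin n, c e.castSucc ⋖ c e.succ)
    (hmono : StrictMono fun e : Fin n => lam (c e.castSucc) (c e.succ))
    {a : VPart n s} (ha : c 1 = a) (j : Fin (n + 1)) (hj : j ≠ 0) {x : VPart n s}
    (hx : c j = x) : atomWord x = atomWord a := by
  induction j using Fin.induction generalizing x with
  | zero => exact absurd rfl hj
  | succ e ih =>
    rcases Nat.eq_zero_or_pos e with he | he
    · have : e.succ = 1 := Fin.ext <| by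
        rw [Fin.val_succ, he, Fin.val_one', Nat.mod_eq_of_lt (by omega)]
      rw [this, ha] at hx
      rw [WithBot.coe_inj.mp hx]
    · have he' : e.castSucc ≠ 0 := Fin.castSucc_ne_zero_of_lt (p := ⟨0, by omega⟩) he
      obtain ⟨x', hx'⟩ := WithBot.ne_bot_iff_exists.mp (ne_bot_of_ne_zero hcov he')
      rw [← ih he' hx'.symm]
      exact (atomWord_eq_of_strictMono_lam h0 hcov hmono he hx'.symm hx).symm

end Chain

end VPart

open VPart in
/-- any maximal chain of `Π_{n,s+1}` containing an edge `x ⋖ y` above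
the bottom edge with `A(x) ≠ A(y)` is not strictly increasing; consequently every
increasing maximal chain passes through the lexicographically least atom and all its
labels above the bottom edge have first coordinate `n`. -/
theorem statement17 (n s : ℕ) (hn : 1 ≤ n) :
    (∀ c : Fin (n + 1) -> WithBot (VPart n s), c 0 = ⊥ -> IsTop (c (Fin.last n)) ->
      (∀ e : Fin n, c e.castSucc ⋖ c e.succ) ->
      (∃ e : Fin n, 1 ≤ (e : ℕ) ∧ ∃ X Y : VPart n s, c e.castSucc = X ∧ c e.succ = Y ∧
        atomWord X ≠ atomWord Y) ->
      ¬ StrictMono fun e : Fin n => lam (c e.castSucc) (c e.succ)) ∧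
    ∀ c : Fin (n + 1) -> WithBot (VPart n s), c 0 = ⊥ -> IsTop (c (Fin.last n)) ->
      (∀ e : Fin n, c e.castSucc ⋖ c e.succ) ->
      StrictMono (fun e : Fin n => lam (c e.castSucc) (c e.succ)) ->
      (∃ a : VPart n s, c 1 = (a : WithBot (VPart n s)) ∧ a.IsAtomic ∧
        ∀ a' : VPart n s, a'.IsAtomic -> wordLe (atomWord a) (atomWord a')) ∧
      ∀ e : Fin n, 1 ≤ (e : ℕ) ->
        (ofLex (lam (c e.castSucc) (c e.succ))).1 = (n : ℤ) := by
  constructor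
  · rintro c h0 - hcov ⟨e, he, x, y, hx, hy, hne⟩ hmono
    exact hne (atomWord_eq_of_strictMono_lam h0 hcov hmono he hx hy)
  · intro c h0 htop hcov hmono
    have : NeZero n := ⟨by omega⟩
    have h1 : (1 : Fin (n + 1)) ≠ 0 := Fin.one_pos'.ne'
    have hlast : Fin.last n ≠ 0 := Fin.last_pos'.ne'
    obtain ⟨a, ha⟩ := WithBot.ne_bot_iff_exists.mp (ne_bot_of_ne_zero hcov h1)
    obtain ⟨T, hT⟩ := WithBot.ne_bot_iff_exists.mp (ne_bot_of_ne_zero hcov hlast)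
    have hid : atomWord a = fun _ k => k := by
      rw [← atomWord_eq_of_strictMono_lam_of_ne_zero h0 hcov hmono ha.symm _ hlast hT.symm]
      exact atomWord_eq_id_of_isTop fun z => WithBot.coe_le_coe.mp (hT ▸ htop z)
    have hbot : ⊥ ⋖ (a : WithBot (VPart n s)) := by
      simpa [← h0, ← ha] using hcov 0
    refine ⟨⟨a, ha.symm, isAtomic_of_bot_covBy hbot,
      fun a' _ => hid ▸ wordLe_id (atomWord_injective a')⟩, fun e he => ?_⟩
    obtain ⟨x, hx⟩ := WithBot.ne_bot_iff_exists.mp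
      (ne_bot_of_ne_zero hcov (Fin.castSucc_ne_zero_of_lt (p := ⟨0, hn⟩) he))
    obtain ⟨y, hy⟩ := WithBot.ne_bot_iff_exists.mp (ne_bot_of_ne_zero hcov e.succ_ne_zero)
    rw [← hx, ← hy, lam_coe_coe_of_atomWord_eq
      (atomWord_eq_of_strictMono_lam h0 hcov hmono he hx.symm hy.symm)]
    rfl
end
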